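/- arXiv:0911.2241 — 2 statements merged into one kernel-verified Lean document; each statement's English description precedes it below -/
import Mathlib

section
/- Let R > 0 and let f : [0,R] × (ℝ/2πℤ) → ℝ be continuously differentiable. Assume that for every t ∈ [0,R] there exist θ₁, θ₂ ∈ ℝ/2πℤ with |f(t,θ₂) − f(t,θ₁)| ≥ 1. Then ∫_{[0,R]×(ℝ/2πℤ)} ((∂f/∂t)² + (∂f/∂θ)²) dt dθ ≥ R/(2π). -/
/-!
On every circle `{t} × ℝ/2πℤ` the function varies by at least `1`, so integrating `∂f/∂θ` between
two points of one period shows `∫ |∂f/∂θ| dθ ≥ 1`; by Cauchy–Schwarz `∫ (∂f/∂θ)² dθ ≥ 1/(2π)`, and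
integrating this over `t ∈ [0, R]` gives the bound.
-/

open Real MeasureTheory intervalIntegral Function Set

theorem sq_intervalIntegral_le_mul_integral_sq {h : ℝ → ℝ} {a b : ℝ} (hab : a ≤ b)
    (hi : IntervalIntegrable h volume a b)
    (hi2 : IntervalIntegrable (fun x => h x ^ 2) volume a b) :
    (∫ x in a..b, h x) ^ 2 ≤ (b - a) * ∫ x in a..b, h x ^ 2 := by
  rcases hab.eq_or_lt with rfl | hab
  · simp
  have hvol : volume (uIoc a b) ≠ 0 := by simp [uIoc_of_le hab.le, hab]
  have hJensen := (even_two.convexOn_pow (𝕜 := ℝ)).map_set_average_le (continuousOn_pow 2)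
    isClosed_univ hvol (by simp [uIoc_of_le hab.le]) (by simp) hi.def' hi2.def'
  rw [interval_average_eq_div, interval_average_eq_div, div_pow,
    div_le_div_iff₀ (by positivity) (by linarith)] at hJensen
  nlinarith

theorem Function.Periodic.periodic_deriv {g : ℝ → ℝ} {T : ℝ} (hg : Periodic g T) :
    Periodic (deriv g) T := fun x => by
  rw [← deriv_comp_add_const, hg.funext]

theorem Function.Periodic.abs_sub_le_integral_abs_deriv {g : ℝ → ℝ} {T : ℝ} (hT : 0 < T)
    (hg : Periodic g T) (hg1 : ContDiff ℝ 1 g) (x y : ℝ) :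
    |g y - g x| ≤ ∫ s in (0)..T, |deriv g s| := by
  have hcont : Continuous (deriv g) := hg1.continuous_deriv le_rfl
  obtain ⟨hxc, hcT⟩ := toIcoMod_mem_Ico hT x y
  set c := toIcoMod hT x y
  have hgc : g c = g y := hg.sub_zsmul_eq _
  calc |g y - g x| = |∫ s in x..c, deriv g s| := by
        rw [integral_deriv_eq_sub (fun s _ => hg1.differentiable one_ne_zero s)
          (hcont.intervalIntegrable _ _), hgc]
    _ ≤ ∫ s in x..c, |deriv g s| := abs_integral_le_integral_abs hxc
    _ ≤ ∫ s in x..x + T, |deriv g s| :=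
        integral_mono_interval le_rfl hxc hcT.le (.of_forall fun _ => abs_nonneg _)
          (hcont.abs.intervalIntegrable _ _)
    _ = ∫ s in (0)..T, |deriv g s| := by
        simpa using (hg.periodic_deriv.comp abs).intervalIntegral_add_eq x 0

theorem Function.Periodic.sq_sub_le_mul_integral_deriv_sq {g : ℝ → ℝ} {T : ℝ} (hT : 0 < T)
    (hg : Periodic g T) (hg1 : ContDiff ℝ 1 g) (x y : ℝ) :
    (g y - g x) ^ 2 ≤ T * ∫ s in (0)..T, deriv g s ^ 2 := by
  have hcont : Continuous (deriv g) := hg1.continuous_deriv le_rfl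
  calc (g y - g x) ^ 2 = |g y - g x| ^ 2 := (sq_abs _).symm
    _ ≤ (∫ s in (0)..T, |deriv g s|) ^ 2 :=
        pow_le_pow_left₀ (abs_nonneg _) (hg.abs_sub_le_integral_abs_deriv hT hg1 x y) 2
    _ ≤ (T - 0) * ∫ s in (0)..T, |deriv g s| ^ 2 :=
        sq_intervalIntegral_le_mul_integral_sq hT.le (hcont.abs.intervalIntegrable _ _)
          ((hcont.abs.pow 2).intervalIntegrable _ _)
    _ = T * ∫ s in (0)..T, deriv g s ^ 2 := by simp only [sq_abs, sub_zero]

theorem DifferentiableAt.hasDerivAt_apply_prodMk {F : Type*} [NormedAddCommGroup F]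
    [NormedSpace ℝ F] {f : ℝ × ℝ → F} {t θ : ℝ} (hf : DifferentiableAt ℝ f (t, θ)) :
    HasDerivAt (fun θ => f (t, θ)) (fderiv ℝ f (t, θ) (0, 1)) θ :=
  hf.hasFDerivAt.comp_hasDerivAt θ ((hasDerivAt_const θ t).prodMk (hasDerivAt_id θ))

/-- Crossing estimate for circles on the flat cylinder `[0,R] × (ℝ/2πℤ)`
(functions on the cylinder are encoded as `2π`-periodic functions in the second
variable).  If on every circle `{t} × (ℝ/2πℤ)` the function `f` varies by at least
`1`, then the Dirichlet energy of `f` is at least `R/(2π)`. -/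
theorem crossing_estimate_circles (R : ℝ) (hR : 0 < R) (f : ℝ × ℝ → ℝ)
    (hf : ContDiff ℝ 1 f)
    (hper : ∀ t θ : ℝ, f (t, θ + 2 * π) = f (t, θ))
    (hcross : ∀ t : ℝ, 0 ≤ t → t ≤ R → ∃ θ₁ θ₂ : ℝ,
      1 ≤ |f (t, θ₂) - f (t, θ₁)|) :
    R / (2 * π) ≤
      ∫ t in (0:ℝ)..R, ∫ θ in (0:ℝ)..(2 * π),
        (fderiv ℝ f (t, θ) (1, 0)) ^ 2 + (fderiv ℝ f (t, θ) (0, 1)) ^ 2 := by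
  have hderiv (t θ : ℝ) : deriv (fun θ => f (t, θ)) θ = fderiv ℝ f (t, θ) (0, 1) :=
    (hf.differentiable one_ne_zero _).hasDerivAt_apply_prodMk.deriv
  have hcircle (t : ℝ) (ht : t ∈ Icc 0 R) :
      1 / (2 * π) ≤ ∫ θ in (0)..(2 * π), fderiv ℝ f (t, θ) (0, 1) ^ 2 := by
    obtain ⟨θ₁, θ₂, hθ⟩ := hcross t ht.1 ht.2
    have hosc := Periodic.sq_sub_le_mul_integral_deriv_sq (g := fun θ => f (t, θ)) two_pi_pos
      (hper t) (hf.comp (contDiff_const.prodMk contDiff_id)) θ₁ θ₂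
    simp only [hderiv] at hosc
    rw [div_le_iff₀' two_pi_pos]
    linarith [one_le_sq_iff_one_le_abs _ |>.mpr hθ]
  calc R / (2 * π) = ∫ t in (0)..R, 1 / (2 * π) := by
        rw [intervalIntegral.integral_const, smul_eq_mul, sub_zero, mul_one_div]
    _ ≤ _ := by
      refine integral_mono_on hR.le intervalIntegrable_const
        (Continuous.intervalIntegrable (by fun_prop) _ _) fun t ht => (hcircle t ht).trans ?_
      refine integral_mono_on two_pi_pos.le ?_ ?_ fun θ _ => le_add_of_nonneg_left (sq_nonneg _)
      all_goals exact Continuous.intervalIntegrable (by fun_prop) _ _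
end

section
/- Let f be holomorphic on the annulus {z ∈ ℂ : e^{−(s+R)} < |z| < e^{s+R}}, where s > 0 and R > 0. Then the Dirichlet energies over nested sub-annuli satisfy ∫_{e^{−s} < |z| < e^{s}} |f′(z)|² dA(z) ≤ e^{−2R} · ∫_{e^{−(s+R)} < |z| < e^{s+R}} |f′(z)|² dA(z), where dA is Lebesgue area measure on ℂ (the right-hand side being allowed to be infinite). -/
/-!
Restrict `f'` to the circles `|z| = r`. By Cauchy's theorem the circle average
`c n = ⨍ z ^ (-n) * f' z` does not depend on `r`, so the `n`-th Fourier coefficient of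
`θ ↦ f' (r e^{iθ})` is `r ^ n * c n`; moreover `c (-1) = ⨍ z * f' z = 0` since `f'` is a derivative.
Polar coordinates and Parseval turn the energy over `{a < |z| < b}` into
`∑ n, 2π |c n|² ∫_a^b r ^ (2n+1) dr`. For `n ≠ -1`, rescaling `r` by `e^{±R}` multiplies the
radial integral by at least `e^{2R}` and maps the inner radii into the outer ones.
-/

open Real MeasureTheory Set AddCircle
open scoped ENNReal

def annulus (a b : ℝ) : Set ℂ := {z | a < ‖z‖ ∧ ‖z‖ < b}

theorem isOpen_annulus (a b : ℝ) : IsOpen (annulus a b) :=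
  isOpen_Ioo.preimage continuous_norm

theorem lintegral_Ioo_mul_left (u : ℝ → ℝ≥0∞) {c : ℝ} (hc : 0 < c) (a b : ℝ) :
    ∫⁻ r in Ioo (c * a) (c * b), u r = ENNReal.ofReal c * ∫⁻ r in Ioo a b, u (c * r) := by
  rw [← image_mul_left_Ioo hc, lintegral_image_eq_lintegral_deriv_mul_of_monotoneOn
    measurableSet_Ioo (fun r _ => (hasDerivAt_const_mul c).hasDerivWithinAt)
    (fun _ _ _ _ h => by gcongr), lintegral_const_mul' _ _ ENNReal.ofReal_ne_top]

theorem lintegral_Ioo_zpow_mul_left (k : ℤ) {c : ℝ} (hc : 0 < c) (a b : ℝ) :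
    ∫⁻ r in Ioo (c * a) (c * b), ENNReal.ofReal (r ^ k) =
      ENNReal.ofReal (c ^ (k + 1)) * ∫⁻ r in Ioo a b, ENNReal.ofReal (r ^ k) := by
  have hck : ∀ r : ℝ,
      ENNReal.ofReal ((c * r) ^ k) = ENNReal.ofReal (c ^ k) * ENNReal.ofReal (r ^ k) := fun r => by
    rw [mul_zpow, ENNReal.ofReal_mul (by positivity)]
  simp_rw [lintegral_Ioo_mul_left _ hc, hck, lintegral_const_mul' _ _ ENNReal.ofReal_ne_top,
    ← mul_assoc, ← ENNReal.ofReal_mul hc.le, zpow_add_one₀ hc.ne', mul_comm c]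

theorem lintegral_Ioo_zpow_le_exp_neg_two_mul (k : ℤ) (hk : 2 ≤ |k + 1|) {R a b : ℝ} (hR : 0 ≤ R)
    (ha : 0 ≤ a) :
    ∫⁻ r in Ioo a b, ENNReal.ofReal (r ^ k) ≤
      ENNReal.ofReal (exp (-(2 * R))) *
        ∫⁻ r in Ioo (exp (-R) * a) (exp R * b), ENNReal.ofReal (r ^ k) := by
  obtain ⟨σ, hσ, hσk⟩ : ∃ σ : ℝ, |σ| = 1 ∧ 2 ≤ σ * (k + 1) := by
    rcases le_abs'.1 hk with h | h
    · exact ⟨-1, by simp, by push_cast [← Int.cast_le (R := ℝ)] at h; linarith⟩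
    · exact ⟨1, by simp, by push_cast [← Int.cast_le (R := ℝ)] at h; linarith⟩
  set c := exp (σ * R)
  have hgain : 1 ≤ exp (-(2 * R)) * c ^ (k + 1) := by
    rw [← rpow_intCast, ← exp_mul, ← exp_add, one_le_exp_iff]
    push_cast
    nlinarith
  have hsub : Ioo (c * a) (c * b) ⊆ Ioo (exp (-R) * a) (exp R * b) := by
    have hσR := abs_le.1 (show |σ * R| ≤ R by rw [abs_mul, hσ, abs_of_nonneg hR, one_mul])
    have hc₁ : exp (-R) ≤ c := exp_le_exp.2 hσR.1
    have hc₂ : c ≤ exp R := exp_le_exp.2 hσR.2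
    rintro x ⟨hxa, hxb⟩
    have hab : a < b := lt_of_mul_lt_mul_left (hxa.trans hxb) (exp_pos _).le
    exact ⟨by nlinarith, by nlinarith⟩
  calc ∫⁻ r in Ioo a b, ENNReal.ofReal (r ^ k)
      ≤ ENNReal.ofReal (exp (-(2 * R)) * c ^ (k + 1)) * ∫⁻ r in Ioo a b, ENNReal.ofReal (r ^ k) :=
        le_mul_of_one_le_left' (by simpa using ENNReal.ofReal_le_ofReal hgain)
    _ = ENNReal.ofReal (exp (-(2 * R))) * ∫⁻ r in Ioo (c * a) (c * b), ENNReal.ofReal (r ^ k) := by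
        rw [lintegral_Ioo_zpow_mul_left k (exp_pos _), ENNReal.ofReal_mul (exp_pos _).le, mul_assoc]
    _ ≤ _ := by gcongr

instance fact_zero_lt_two_pi : Fact (0 < 2 * π) := ⟨two_pi_pos⟩

theorem coe_toCircle_two_pi (θ : ℝ) :
    (toCircle (θ : AddCircle (2 * π)) : ℂ) = Complex.exp (θ * Complex.I) := by
  rw [toCircle_apply_mk, Circle.coe_exp, div_self two_pi_pos.ne', one_mul]

theorem lintegral_Ioo_neg_pi_pi (ψ : AddCircle (2 * π) → ℝ≥0∞) :
    ∫⁻ θ in Ioo (-π) π, ψ θ = ∫⁻ t, ψ t := by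
  rw [← AddCircle.lintegral_preimage (2 * π) (-π), show -π + 2 * π = π by ring,
    setLIntegral_congr Ioo_ae_eq_Ioc]

theorem lintegral_annulus_eq_lintegral_addCircle (φ : ℂ → ℝ≥0∞) (hφ : Measurable φ) {a : ℝ}
    (ha : 0 ≤ a) (b : ℝ) :
    ∫⁻ z in annulus a b, φ z =
      ∫⁻ r in Ioo a b, ENNReal.ofReal r * ∫⁻ t : AddCircle (2 * π), φ (r * toCircle t) := by
  have hpolar :
      Complex.polarCoord.symm = fun p : ℝ × ℝ => p.1 * Complex.exp (p.2 * Complex.I) := by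
    ext1 p; simp [Complex.exp_mul_I]
  have htarget : polarCoord.target ∩ Prod.fst ⁻¹' Ioo a b = Ioo a b ×ˢ Ioo (-π) π := by
    ext ⟨r, θ⟩
    simp only [polarCoord_target, mem_inter_iff, mem_prod, mem_Ioi, mem_preimage, mem_Ioo]
    constructor
    · rintro ⟨⟨-, hθ⟩, hr⟩; exact ⟨hr, hθ⟩
    · rintro ⟨hr, hθ⟩; exact ⟨⟨ha.trans_lt hr.1, hθ⟩, hr⟩
  have hmeas : Measurable fun p : ℝ × ℝ => ENNReal.ofReal p.1 * φ (Complex.polarCoord.symm p) := by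
    rw [hpolar]; fun_prop
  rw [← lintegral_indicator (isOpen_annulus a b).measurableSet,
    ← Complex.lintegral_comp_polarCoord_symm]
  have hind : ∀ p ∈ polarCoord.target,
      ENNReal.ofReal p.1 • (annulus a b).indicator φ (Complex.polarCoord.symm p) =
        (Prod.fst ⁻¹' Ioo a b).indicator
          (fun p : ℝ × ℝ => ENNReal.ofReal p.1 * φ (Complex.polarCoord.symm p)) p := by
    rintro ⟨r, θ⟩ hp
    have hr : 0 < r := hp.1
    simp only [indicator, annulus, mem_ofPred_eq, Complex.norm_polarCoord_symm, abs_of_pos hr,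
      mem_preimage, mem_Ioo, smul_eq_mul]
    split_ifs <;> simp
  rw [setLIntegral_congr_fun polarCoord.open_target.measurableSet hind,
    lintegral_indicator (measurableSet_Ioo.preimage measurable_fst), Measure.restrict_restrict
      (measurableSet_Ioo.preimage measurable_fst), inter_comm, htarget, Measure.volume_eq_prod,
    setLIntegral_prod _ hmeas.aemeasurable]
  refine setLIntegral_congr_fun measurableSet_Ioo fun r _ => ?_
  rw [lintegral_const_mul' _ _ ENNReal.ofReal_ne_top, hpolar]
  simp only [← coe_toCircle_two_pi]
  rw [lintegral_Ioo_neg_pi_pi (fun t => φ (r * toCircle t))]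

theorem lintegral_norm_sq_eq_tsum_fourierCoeff {T : ℝ} [Fact (0 < T)] {F : AddCircle T → ℂ}
    (hF : Continuous F) :
    ∫⁻ t, ENNReal.ofReal (‖F t‖ ^ 2) ∂haarAddCircle =
      ∑' n : ℤ, ENNReal.ofReal (‖fourierCoeff F n‖ ^ 2) := by
  let F' : C(AddCircle T, ℂ) := ⟨F, hF⟩
  have hparseval := hasSum_sq_fourierCoeff (F'.toLp 2 haarAddCircle ℂ)
  simp_rw [fourierCoeff_toLp] at hparseval
  have hL2 : ∫ t, ‖F'.toLp 2 haarAddCircle ℂ t‖ ^ 2 ∂haarAddCircle =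
      ∫ t, ‖F t‖ ^ 2 ∂haarAddCircle :=
    integral_congr_ae <| (ContinuousMap.coeFn_toLp (p := 2) haarAddCircle (𝕜 := ℂ) F').mono
      fun t ht => congrArg (‖·‖ ^ 2) ht
  have hint : Integrable (fun t => ‖F t‖ ^ 2) (haarAddCircle (T := T)) := by
    simpa using (by fun_prop : Continuous fun t => ‖F t‖ ^ 2).continuousOn.integrableOn_compact
      isCompact_univ
  rw [← ofReal_integral_eq_lintegral_ofReal hint (ae_of_all _ fun _ => sq_nonneg _), ← hL2,
    ← hparseval.tsum_eq, ENNReal.ofReal_tsum_of_nonneg (fun _ => sq_nonneg _) hparseval.summable]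
  rfl

theorem fourierCoeff_comp_mul_toCircle (g : ℂ → ℂ) (n : ℤ) {r : ℝ} (hr : r ≠ 0) :
    fourierCoeff (fun t : AddCircle (2 * π) => g (r * toCircle t)) n =
      r ^ n * circleAverage (fun z => z ^ (-n) * g z) 0 r := by
  rw [fourierCoeff_eq_intervalIntegral _ n 0, zero_add, circleAverage_def, one_div, mul_smul_comm,
    ← intervalIntegral.integral_const_mul]
  congr 1
  refine intervalIntegral.integral_congr fun θ _ => ?_
  have hr' : (r : ℂ) ≠ 0 := by exact_mod_cast hr
  rw [coe_toCircle_two_pi, fourier_coe_apply, circleMap_zero, mul_zpow, ← Complex.exp_int_mul,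
    smul_eq_mul, zpow_neg, ← mul_assoc, ← mul_assoc, mul_inv_cancel₀ (zpow_ne_zero n hr'), one_mul]
  congr 2
  field_simp
  push_cast
  ring

theorem circleAverage_eq_of_differentiableOn_annulus {g : ℂ → ℂ} {a b r₁ r₂ : ℝ}
    (hg : DifferentiableOn ℂ g (annulus a b)) (ha : 0 ≤ a) (h₁ : r₁ ∈ Ioo a b)
    (h₂ : r₂ ∈ Ioo a b) : circleAverage g 0 r₁ = circleAverage g 0 r₂ := by
  wlog h : r₁ ≤ r₂ generalizing r₁ r₂
  · exact (this h₂ h₁ (le_of_not_ge h)).symm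
  have hr₁ : 0 < r₁ := ha.trans_lt h₁.1
  have hsub : Metric.closedBall (0 : ℂ) r₂ \ Metric.ball 0 r₁ ⊆ annulus a b := by
    rintro z ⟨hz₂, hz₁⟩
    rw [mem_closedBall_zero_iff] at hz₂
    rw [mem_ball_zero_iff, not_lt] at hz₁
    exact ⟨h₁.1.trans_le hz₁, hz₂.trans_lt h₂.2⟩
  have hd : DifferentiableOn ℂ (fun z => (z - 0)⁻¹ • g z) (annulus a b) := by
    refine ((differentiableOn_id.sub_const 0).inv fun z hz => ?_).smul hg
    rw [sub_zero, ← norm_pos_iff]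
    exact ha.trans_lt hz.1
  rw [circleAverage_eq_circleIntegral hr₁.ne',
    circleAverage_eq_circleIntegral (hr₁.trans_le h).ne',
    Complex.circleIntegral_eq_of_differentiable_on_annulus_off_countable hr₁ h countable_empty
      (hd.continuousOn.mono hsub)]
  rintro z ⟨⟨hz₂, hz₁⟩, -⟩
  exact hd.differentiableAt ((isOpen_annulus a b).mem_nhds
    (hsub ⟨Metric.ball_subset_closedBall hz₂, fun hz => hz₁ (Metric.ball_subset_closedBall hz)⟩))

theorem circleAverage_mul_deriv_eq_zero {f : ℂ → ℂ} {r : ℝ} (hr : 0 < r)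
    (hf : ∀ z ∈ Metric.sphere (0 : ℂ) r, DifferentiableAt ℂ f z) :
    circleAverage (fun z => z * deriv f z) 0 r = 0 := by
  rw [circleAverage_eq_circleIntegral hr.ne', smul_eq_zero]
  right
  rw [circleIntegral.integral_congr hr.le fun z hz => ?_]
  · exact circleIntegral.integral_eq_zero_of_hasDerivWithinAt hr.le fun z hz =>
      (hf z hz).hasDerivAt.hasDerivWithinAt
  have hz0 : z ≠ 0 := Metric.ne_of_mem_sphere hz hr.ne'
  simp [hz0]

theorem lintegral_annulus_norm_sq_eq_tsum {g : ℂ → ℂ} {a b ρ : ℝ} (hg_meas : Measurable g)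
    (hg : DifferentiableOn ℂ g (annulus a b)) (ha : 0 ≤ a) (hρ : ρ ∈ Ioo a b) :
    ∫⁻ z in annulus a b, ENNReal.ofReal (‖g z‖ ^ 2) =
      ∑' n : ℤ, ENNReal.ofReal (2 * π * ‖circleAverage (fun z => z ^ (-n) * g z) 0 ρ‖ ^ 2) *
        ∫⁻ r in Ioo a b, ENNReal.ofReal (r ^ (2 * n + 1)) := by
  simp_rw [← lintegral_const_mul' _ _ ENNReal.ofReal_ne_top]
  rw [lintegral_annulus_eq_lintegral_addCircle _ (by fun_prop) ha, ← lintegral_tsum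
    fun n => by fun_prop]
  refine setLIntegral_congr_fun measurableSet_Ioo fun r hr => ?_
  have hr₀ : 0 < r := ha.trans_lt hr.1
  have hcircle : ∀ t : AddCircle (2 * π), (r : ℂ) * toCircle t ∈ annulus a b := fun t => by
    simpa [annulus, abs_of_pos hr₀, Circle.norm_coe] using hr
  have hcont : Continuous fun t : AddCircle (2 * π) => g (r * toCircle t) :=
    hg.continuousOn.comp_continuous (by fun_prop) hcircle
  rw [volume_eq_smul_haarAddCircle, lintegral_smul_measure,
    lintegral_norm_sq_eq_tsum_fourierCoeff hcont, smul_eq_mul, ← ENNReal.tsum_mul_left,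
    ← ENNReal.tsum_mul_left]
  refine tsum_congr fun n => ?_
  have hgn : DifferentiableOn ℂ (fun z => z ^ (-n) * g z) (annulus a b) :=
    (differentiableOn_id.zpow (Or.inl fun z hz => norm_pos_iff.1 (ha.trans_lt hz.1))).mul hg
  rw [fourierCoeff_comp_mul_toCircle g n hr₀.ne',
    circleAverage_eq_of_differentiableOn_annulus hgn ha hr hρ, ← ENNReal.ofReal_mul two_pi_pos.le,
    ← ENNReal.ofReal_mul hr₀.le, ← ENNReal.ofReal_mul (by positivity)]
  congr 1
  rw [norm_mul, norm_zpow, Complex.norm_real, norm_of_nonneg hr₀.le, zpow_add_one₀ hr₀.ne',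
    mul_comm 2 n, zpow_mul, zpow_two]
  ring

/-- Energy decay for holomorphic functions on annuli: if `f` is holomorphic on
`{e^{−(s+R)} < |z| < e^{s+R}}`, then the Dirichlet energy of `f` over the inner
annulus `{e^{−s} < |z| < e^{s}}` is at most `e^{−2R}` times the Dirichlet energy
over the whole annulus (the latter being allowed to be infinite). -/
theorem holomorphic_annulus_energy_decay (s R : ℝ) (hs : 0 < s) (hR : 0 < R)
    (f : ℂ → ℂ)
    (hf : DifferentiableOn ℂ f
      {z : ℂ | Real.exp (-(s + R)) < ‖z‖ ∧
        ‖z‖ < Real.exp (s + R)}) :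
    (∫⁻ z in {z : ℂ | Real.exp (-s) < ‖z‖ ∧ ‖z‖ < Real.exp s},
        ENNReal.ofReal (‖deriv f z‖ ^ 2)) ≤
      ENNReal.ofReal (Real.exp (-(2 * R))) *
        ∫⁻ z in {z : ℂ | Real.exp (-(s + R)) < ‖z‖ ∧
            ‖z‖ < Real.exp (s + R)},
          ENNReal.ofReal (‖deriv f z‖ ^ 2) := by
  change ∫⁻ z in annulus (exp (-s)) (exp s), _ ≤
    _ * ∫⁻ z in annulus (exp (-(s + R))) (exp (s + R)), _
  have hderiv : DifferentiableOn ℂ (deriv f) (annulus (exp (-(s + R))) (exp (s + R))) :=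
    (hf.analyticOnNhd (isOpen_annulus _ _)).deriv.differentiableOn
  have hsub : annulus (exp (-s)) (exp s) ⊆ annulus (exp (-(s + R))) (exp (s + R)) := fun z hz =>
    ⟨(exp_le_exp.2 (by linarith)).trans_lt hz.1, hz.2.trans_le (exp_le_exp.2 (by linarith))⟩
  have h₁ : ∀ u, 0 < u → (1 : ℝ) ∈ Ioo (exp (-u)) (exp u) := fun u hu =>
    ⟨exp_lt_one_iff.2 (neg_lt_zero.2 hu), one_lt_exp_iff.2 hu⟩
  rw [lintegral_annulus_norm_sq_eq_tsum (measurable_deriv f) (hderiv.mono hsub) (exp_pos _).le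
      (h₁ s hs),
    lintegral_annulus_norm_sq_eq_tsum (measurable_deriv f) hderiv (exp_pos _).le
      (h₁ _ (by linarith)), ← ENNReal.tsum_mul_left]
  refine ENNReal.tsum_le_tsum fun n => ?_
  rcases eq_or_ne n (-1) with rfl | hn
  · have hf₁ : ∀ z ∈ Metric.sphere (0 : ℂ) 1, DifferentiableAt ℂ f z := fun z hz =>
      hf.differentiableAt ((isOpen_annulus _ _).mem_nhds <| by
        rw [annulus, mem_ofPred_eq, mem_sphere_zero_iff_norm.1 hz]; exact h₁ _ (by linarith))
    simp [circleAverage_mul_deriv_eq_zero one_pos hf₁]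
  have hdecay := lintegral_Ioo_zpow_le_exp_neg_two_mul (2 * n + 1) (le_abs.2 (by omega)) hR.le
    (exp_pos (-s)).le (b := exp s)
  rw [← exp_add, ← exp_add, show -R + -s = -(s + R) by ring, add_comm R s] at hdecay
  rw [mul_left_comm]
  gcongr
end
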